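/- arXiv:1102.3396 — 5 statements merged into one kernel-verified Lean document; each statement's English description precedes it below -/
import Mathlib

section
/- Let G(k) (k = 0,1,2,…) be an arbitrary sequence of finite simple graphs on the vertex set Fin n and let x(k) be the DSSD states. Suppose S is a set of vertices not containing the source vertex 0, and there exists τ ≥ 0 such that for every k ≥ τ no edge of G(k) joins a vertex of S to a vertex outside S. Then for every vertex v ∈ S, the state x_v(k) converges to 0 as k → ∞. -/
open Filter Topology

/-- The DSSD states for a sequence of graphs `G k` on `Fin n`, source vertex `0`,
source strength `s`: `x 0 = 0` and
`x (k+1) i = (∑_{j ∈ N_i(k)} x k j + s·[i = 0]) / (d_i(k) + 1)`. -/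
noncomputable def dssd {n : ℕ} [NeZero n] (G : ℕ → SimpleGraph (Fin n))
    [∀ k, DecidableRel (G k).Adj] (s : ℝ) : ℕ → Fin n → ℝ
  | 0 => 0
  | (k + 1) => fun i =>
      ((∑ j ∈ (G k).neighborFinset i, dssd G s k j) + (if i = 0 then s else 0)) /
        (((G k).degree i : ℝ) + 1)

lemma dssd_nonneg {n : ℕ} [NeZero n] (G : ℕ → SimpleGraph (Fin n))
    [∀ k, DecidableRel (G k).Adj] (s : ℝ) (hs : 0 ≤ s) :
    ∀ k i, 0 ≤ dssd G s k i := by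
  intro k
  induction k with
  | zero => intro i; simp [dssd]
  | succ k ih =>
    intro i
    show 0 ≤ ((∑ j ∈ (G k).neighborFinset i, dssd G s k j) + (if i = 0 then s else 0)) /
        (((G k).degree i : ℝ) + 1)
    apply div_nonneg
    · apply add_nonneg
      · exact Finset.sum_nonneg fun j _ => ih j
      · split_ifs <;> simp [hs]
    · positivity

lemma dssd_key {n : ℕ} [NeZero n] (hn : 2 ≤ n) (G : ℕ → SimpleGraph (Fin n))
    [∀ k, DecidableRel (G k).Adj] (s : ℝ) (hs : 0 ≤ s)
    (S : Set (Fin n)) (hS0 : (0 : Fin n) ∉ S) (τ : ℕ)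
    (hsep : ∀ k, τ ≤ k → ∀ u ∈ S, ∀ v ∉ S, ¬ (G k).Adj u v)
    (c : ℝ) (hc0 : 0 ≤ c) (hc : ∀ u ∈ S, dssd G s τ u ≤ c) :
    ∀ m, ∀ u ∈ S, dssd G s (τ + m) u ≤ c * (((n : ℝ) - 1) / n) ^ m := by
  have hn0 : (0 : ℝ) < n := by positivity
  have hr0 : (0 : ℝ) ≤ ((n : ℝ) - 1) / n := by
    apply div_nonneg _ (le_of_lt hn0)
    have : (1 : ℝ) ≤ n := by exact_mod_cast Nat.one_le_of_lt hn
    linarith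
  intro m
  induction m with
  | zero => intro u hu; simpa using hc u hu
  | succ m ih =>
    intro u hu
    set k := τ + m with hk
    have hτk : τ ≤ k := Nat.le_add_right _ _
    have hune : u ≠ 0 := fun h => hS0 (h ▸ hu)
    have hx : dssd G s (τ + (m + 1)) u =
        (∑ j ∈ (G k).neighborFinset u, dssd G s k j) / (((G k).degree u : ℝ) + 1) := by
      show ((∑ j ∈ (G k).neighborFinset u, dssd G s k j) + (if u = 0 then s else 0)) /
        (((G k).degree u : ℝ) + 1) = _
      rw [if_neg hune, add_zero]
    set B := c * (((n : ℝ) - 1) / n) ^ m with hB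
    have hB0 : 0 ≤ B := mul_nonneg hc0 (pow_nonneg hr0 _)
    have hsum : ∑ j ∈ (G k).neighborFinset u, dssd G s k j ≤ ((G k).degree u : ℝ) * B := by
      rw [← SimpleGraph.card_neighborFinset_eq_degree]
      calc ∑ j ∈ (G k).neighborFinset u, dssd G s k j
          ≤ ∑ _j ∈ (G k).neighborFinset u, B := by
            apply Finset.sum_le_sum
            intro j hj
            have hadj : (G k).Adj u j := (SimpleGraph.mem_neighborFinset _ _ _).mp hj
            have hjS : j ∈ S := by
              by_contra hjS
              exact hsep k hτk u hu j hjS hadj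
            exact ih j hjS
        _ = (((G k).neighborFinset u).card : ℝ) * B := by
            rw [Finset.sum_const, nsmul_eq_mul]
    have hd : ((G k).degree u : ℝ) ≤ (n : ℝ) - 1 := by
      have := (G k).degree_lt_card_verts u
      have : (G k).degree u ≤ n - 1 := by
        simpa [Fintype.card_fin] using Nat.lt_iff_le_pred (by omega) |>.mp
          (by simpa [Fintype.card_fin] using (G k).degree_lt_card_verts u)
      have h1 : (1 : ℕ) ≤ n := Nat.one_le_of_lt hn
      calc ((G k).degree u : ℝ) ≤ ((n - 1 : ℕ) : ℝ) := by exact_mod_cast this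
        _ = (n : ℝ) - 1 := by push_cast [h1]; ring
    have hd0 : (0 : ℝ) < ((G k).degree u : ℝ) + 1 := by positivity
    rw [hx]
    have step2 : ((G k).degree u : ℝ) / (((G k).degree u : ℝ) + 1) ≤ ((n : ℝ) - 1) / n := by
      rw [div_le_div_iff₀ hd0 hn0]
      nlinarith [hd]
    calc (∑ j ∈ (G k).neighborFinset u, dssd G s k j) / (((G k).degree u : ℝ) + 1)
        ≤ ((G k).degree u : ℝ) * B / (((G k).degree u : ℝ) + 1) :=
          div_le_div_of_nonneg_right hsum hd0.le
      _ = B * (((G k).degree u : ℝ) / (((G k).degree u : ℝ) + 1)) := by ring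
      _ ≤ B * (((n : ℝ) - 1) / n) := mul_le_mul_of_nonneg_left step2 hB0
      _ = c * (((n : ℝ) - 1) / n) ^ (m + 1) := by rw [hB]; ring

/-- If a set `S` of vertices not containing the source is, from time `τ` on, never joined
by any edge to its complement, then the DSSD state of every vertex of `S` converges to `0`. -/
theorem dssd_tendsto_zero_of_separated {n : ℕ} [NeZero n] (hn : 2 ≤ n)
    (G : ℕ → SimpleGraph (Fin n)) [∀ k, DecidableRel (G k).Adj]
    (s : ℝ) (hs : 0 < s)
    (S : Set (Fin n)) (hS0 : (0 : Fin n) ∉ S)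
    (τ : ℕ)
    (hsep : ∀ k, τ ≤ k → ∀ u ∈ S, ∀ v ∉ S, ¬ (G k).Adj u v)
    (v : Fin n) (hv : v ∈ S) :
    Tendsto (fun k => dssd G s k v) atTop (𝓝 (0 : ℝ)) := by
  have hnn := dssd_nonneg G s hs.le
  set r : ℝ := ((n : ℝ) - 1) / n with hr
  have hn0 : (0 : ℝ) < n := by positivity
  have hr0 : 0 ≤ r := by
    apply div_nonneg _ hn0.le
    have : (1 : ℝ) ≤ n := by exact_mod_cast Nat.one_le_of_lt hn
    linarith
  have hr1 : r < 1 := by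
    rw [hr, div_lt_one hn0]; linarith
  obtain ⟨c, hc0, hc⟩ : ∃ c : ℝ, 0 ≤ c ∧ ∀ u ∈ S, dssd G s τ u ≤ c := by
    refine ⟨Finset.univ.sup' Finset.univ_nonempty (dssd G s τ), ?_, ?_⟩
    · exact le_trans (hnn τ v) (Finset.le_sup' _ (Finset.mem_univ v))
    · intro u _; exact Finset.le_sup' _ (Finset.mem_univ u)
  have key := dssd_key hn G s hs.le S hS0 τ hsep c hc0 hc
  have htend : Tendsto (fun k : ℕ => c * r ^ (k - τ)) atTop (𝓝 (0 : ℝ)) := by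
    have h1 : Tendsto (fun m : ℕ => r ^ m) atTop (𝓝 (0 : ℝ)) :=
      tendsto_pow_atTop_nhds_zero_of_lt_one hr0 hr1
    have h2 : Tendsto (fun k : ℕ => k - τ) atTop atTop := tendsto_sub_atTop_nat τ
    have := (h1.comp h2).const_mul c
    simpa using this
  apply squeeze_zero' (Eventually.of_forall fun k => hnn k v) _ htend
  filter_upwards [eventually_ge_atTop τ] with k hk
  have : τ + (k - τ) = k := Nat.add_sub_cancel' hk
  calc dssd G s k v = dssd G s (τ + (k - τ)) v := by rw [this]
    _ ≤ c * r ^ (k - τ) := key (k - τ) v hv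
end

section
/- Let G(k) (k = 0,1,2,…) be an arbitrary sequence of finite simple graphs on the vertex set Fin n and let x(k) be the DSSD states. Suppose S is a nonempty set of vertices not containing the source vertex 0, and there exists τ ≥ 0 such that for every k ≥ τ no edge of G(k) joins a vertex of S to a vertex outside S. Then for every k ≥ τ and every v ∈ S, |x_v(k)| ≤ ((n−1)/n)^{k−τ} · max_{j ∈ S} |x_j(τ)|. -/
open Filter Topology

/-- If a nonempty set `S` of vertices not containing the source is, from time `τ` on,
never joined by any edge to its complement, then for every `k ≥ τ` and `v ∈ S`,
`|x_v(k)| ≤ ((n-1)/n)^(k-τ) · max_{j ∈ S} |x_j(τ)|`. -/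
theorem dssd_geometric_decay_of_separated {n : ℕ} [NeZero n] (hn : 2 ≤ n)
    (G : ℕ → SimpleGraph (Fin n)) [∀ k, DecidableRel (G k).Adj]
    (s : ℝ) (hs : 0 < s)
    (S : Finset (Fin n)) (hS : S.Nonempty) (hS0 : (0 : Fin n) ∉ S)
    (τ : ℕ)
    (hsep : ∀ k, τ ≤ k → ∀ u ∈ S, ∀ v ∉ S, ¬ (G k).Adj u v)
    (k : ℕ) (hk : τ ≤ k) (v : Fin n) (hv : v ∈ S) :
    |dssd G s k v| ≤
      (((n : ℝ) - 1) / n) ^ (k - τ) * S.sup' hS (fun j => |dssd G s τ j|) := by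
  set M := S.sup' hS (fun j => |dssd G s τ j|) with hMdef
  have hM0 : 0 ≤ M := by
    obtain ⟨j0, hj0⟩ := id hS
    rw [hMdef]
    exact le_trans (abs_nonneg _) (Finset.le_sup' (fun j => |dssd G s τ j|) hj0)
  have hnpos : (0:ℝ) < n := by positivity
  have hr0 : 0 ≤ ((n : ℝ) - 1) / n := by
    apply div_nonneg _ hnpos.le
    have : (1:ℝ) ≤ n := by exact_mod_cast Nat.one_le_of_lt hn
    linarith
  induction k, hk using Nat.le_induction generalizing v with
  | base =>
    simp only [Nat.sub_self, pow_zero, one_mul]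
    rw [hMdef]
    exact Finset.le_sup' (fun j => |dssd G s τ j|) hv
  | succ k hk ih =>
    have hv0 : v ≠ 0 := fun h => hS0 (h ▸ hv)
    have hsub : (G k).neighborFinset v ⊆ S := by
      intro j hj
      rw [SimpleGraph.mem_neighborFinset] at hj
      by_contra hjS
      exact hsep k hk v hv j hjS hj
    set d := ((G k).degree v : ℝ) with hddef
    have hd0 : (0:ℝ) ≤ d := by positivity
    have hdlt : d ≤ (n:ℝ) - 1 := by
      rw [hddef]
      have h := (G k).degree_lt_card_verts v
      rw [Fintype.card_fin] at h
      have h1 : (G k).degree v + 1 ≤ n := h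
      have h2 : ((G k).degree v : ℝ) + 1 ≤ (n:ℝ) := by exact_mod_cast h1
      linarith
    set B := (((n : ℝ) - 1) / n) ^ (k - τ) * M with hBdef
    have hB0 : 0 ≤ B := by positivity
    have hstep : (k + 1 - τ) = (k - τ) + 1 := by omega
    rw [hstep, pow_succ]
    have key : |dssd G s (k+1) v| ≤ d / (d + 1) * B := by
      have hd1 : (0:ℝ) < d + 1 := by linarith
      show |((∑ j ∈ (G k).neighborFinset v, dssd G s k j) + (if v = 0 then s else 0)) /
        (d + 1)| ≤ _
      rw [if_neg hv0, add_zero, abs_div, abs_of_pos hd1]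
      have hsum : |∑ j ∈ (G k).neighborFinset v, dssd G s k j| ≤ d * B := by
        calc |∑ j ∈ (G k).neighborFinset v, dssd G s k j|
            ≤ ∑ j ∈ (G k).neighborFinset v, |dssd G s k j| := Finset.abs_sum_le_sum_abs _ _
          _ ≤ ∑ j ∈ (G k).neighborFinset v, B := by
              apply Finset.sum_le_sum
              intro j hj
              exact ih j (hsub hj)
          _ = d * B := by
              rw [Finset.sum_const, SimpleGraph.card_neighborFinset_eq_degree]
              rw [hddef]; push_cast; ring
      calc |∑ j ∈ (G k).neighborFinset v, dssd G s k j| / (d + 1)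
          ≤ d * B / (d + 1) := by gcongr
        _ = d / (d + 1) * B := by ring
    refine key.trans ?_
    have hfrac : d / (d + 1) ≤ ((n:ℝ) - 1) / n := by
      rw [div_le_div_iff₀ (by linarith) hnpos]
      nlinarith
    calc d / (d + 1) * B ≤ ((n:ℝ) - 1) / n * B := by
          apply mul_le_mul_of_nonneg_right hfrac hB0
      _ = (((n : ℝ) - 1) / n) ^ (k - τ) * (((n:ℝ) - 1)/n) * M := by
          rw [hBdef]; ring
end

section
/- Let G_1, …, G_N be finite simple graphs on Fin n, let P be an entrywise positive row-stochastic N×N matrix, let π ∈ ℝ^N have positive entries summing to 1, and let s > 0. Then ρ(C) < 1; and with q = (q^{(1)}, …, q^{(N)}) := (I − C)^{-1} ψ and μ := Σ_{i=1}^N q^{(i)} ∈ ℝ^n, the vector μ is entrywise nonnegative, and for every vertex u, μ_u > 0 if and only if u lies in the connected component of the source vertex 0 in the union graph of G_1, …, G_N (in particular μ_0 > 0). -/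
open Matrix Filter Topology Kronecker
open scoped ENNReal

/-- `J(G)` : the matrix with entries `A(G)_{ij} / (d_G(i) + 1)`. -/
noncomputable def Jmat {n : ℕ} (G : SimpleGraph (Fin n)) [DecidableRel G.Adj] :
    Matrix (Fin n) (Fin n) ℝ :=
  Matrix.of fun i j => (if G.Adj i j then 1 else 0) / ((G.degree i : ℝ) + 1)

/-- Spectral radius of a real square matrix: max modulus of its complex eigenvalues. -/
noncomputable def specRad {m : Type*} [Fintype m] [DecidableEq m] (M : Matrix m m ℝ) : ℝ≥0∞ :=
  spectralRadius ℂ (M.map (algebraMap ℝ ℂ))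

/-- Block-diagonal matrix with blocks `Js 1, …, Js N`, with rows/columns indexed by
pairs `(i, u)`, `(i, u)` being coordinate `u` of block `i`. -/
def blkDiag {N : ℕ} {m : Type*} [DecidableEq m] (Js : Fin N → Matrix m m ℝ) :
    Matrix (Fin N × m) (Fin N × m) ℝ :=
  (Matrix.blockDiagonal Js).submatrix Prod.swap Prod.swap

/-- `C := (Pᵀ ⊗ I_n) · blockdiag(J(G_1), …, J(G_N))`. -/
noncomputable def Cmat {N n : ℕ} (Gs : Fin N → SimpleGraph (Fin n))
    [∀ i, DecidableRel (Gs i).Adj] (P : Matrix (Fin N) (Fin N) ℝ) :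
    Matrix (Fin N × Fin n) (Fin N × Fin n) ℝ :=
  (P.transpose ⊗ₖ (1 : Matrix (Fin n) (Fin n) ℝ)) * blkDiag (fun i => Jmat (Gs i))

/-- `ψ ∈ ℝ^{Nn}` defined blockwise by `ψ^{(j)} = (∑_i p_{ij} π_i s / (d_{G_i}(0)+1)) e_0`. -/
noncomputable def psiVec {N n : ℕ} [NeZero n] (Gs : Fin N → SimpleGraph (Fin n))
    [∀ i, DecidableRel (Gs i).Adj] (P : Matrix (Fin N) (Fin N) ℝ)
    (pi : Fin N → ℝ) (s : ℝ) : Fin N × Fin n → ℝ :=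
  fun p => if p.2 = 0 then ∑ i, P i p.1 * pi i * s / (((Gs i).degree 0 : ℝ) + 1) else 0

/-- `μ := ∑_{i=1}^N q^{(i)} ∈ ℝ^n`, where `q := (I − C)⁻¹ ψ ∈ ℝ^{Nn}`. -/
noncomputable def muVec {N n : ℕ} [NeZero n] (Gs : Fin N → SimpleGraph (Fin n))
    [∀ i, DecidableRel (Gs i).Adj] (P : Matrix (Fin N) (Fin N) ℝ)
    (pi : Fin N → ℝ) (s : ℝ) : Fin n → ℝ :=
  fun u => ∑ i : Fin N, ((1 - Cmat Gs P)⁻¹).mulVec (psiVec Gs P pi s) (i, u)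

/- ## Auxiliary lemmas -/

attribute [local instance] Matrix.linftyOpNormedRing Matrix.linftyOpNormedAlgebra

set_option linter.unusedSectionVars false

section Aux

open Finset

namespace MuAux

section Jlem

variable {n : ℕ} (G : SimpleGraph (Fin n)) [DecidableRel G.Adj]

theorem Jmat_nonneg (u v : Fin n) : 0 ≤ Jmat G u v := by
  unfold Jmat; dsimp; positivity

theorem Jmat_rowsum (u : Fin n) : ∑ v, Jmat G u v = (G.degree u : ℝ) / ((G.degree u : ℝ) + 1) := by
  unfold Jmat
  dsimp
  rw [← Finset.sum_div]
  congr 1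
  rw [Finset.sum_boole]
  simp [SimpleGraph.degree, SimpleGraph.neighborFinset]

theorem Jmat_rowsum_le [NeZero n] (u : Fin n) : ∑ v, Jmat G u v ≤ ((n : ℝ) - 1) / n := by
  rw [Jmat_rowsum]
  have h1 : G.degree u + 1 ≤ n := by
    simpa using Nat.succ_le_of_lt (by simpa using G.degree_lt_card_verts u)
  have hd : (G.degree u : ℝ) + 1 ≤ (n : ℝ) := by exact_mod_cast h1
  have hd0 : (0:ℝ) ≤ (G.degree u : ℝ) := by positivity
  have hn : (1:ℝ) ≤ n := by linarith
  rw [div_le_div_iff₀ (by linarith) (by linarith)]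
  nlinarith

theorem Jmat_pos_iff (u v : Fin n) : 0 < Jmat G u v ↔ G.Adj u v := by
  unfold Jmat
  dsimp
  have hd : (0:ℝ) < (G.degree u : ℝ) + 1 := by positivity
  constructor
  · intro h
    by_contra hadj
    simp [hadj] at h
  · intro h
    simp only [h, if_true]
    positivity

end Jlem

theorem pow_stoch {N : ℕ} (P : Matrix (Fin N) (Fin N) ℝ)
    (hP0 : ∀ i j, 0 ≤ P i j) (hProw : ∀ i, ∑ j, P i j = 1) (m : ℕ) :
    (∀ i j, 0 ≤ (P ^ m) i j) ∧ (∀ i, ∑ j, (P ^ m) i j = 1) := by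
  induction m with
  | zero =>
      constructor
      · intro i j; simp [Matrix.one_apply]; positivity
      · intro i; simp [Matrix.one_apply]
  | succ m ih =>
      rw [pow_succ]
      constructor
      · intro i j
        rw [Matrix.mul_apply]
        exact Finset.sum_nonneg fun k _ => mul_nonneg (ih.1 i k) (hP0 k j)
      · intro i
        simp_rw [Matrix.mul_apply]
        rw [Finset.sum_comm]
        simp_rw [← Finset.mul_sum, hProw]
        simpa using ih.2 i

section Clem

variable {N n : ℕ} [NeZero n] (Gs : Fin N → SimpleGraph (Fin n)) [∀ i, DecidableRel (Gs i).Adj]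
  (P : Matrix (Fin N) (Fin N) ℝ)

theorem Cmat_apply (i j : Fin N) (u v : Fin n) :
    Cmat Gs P (i, u) (j, v) = P j i * Jmat (Gs j) u v := by
  simp [Cmat, Matrix.mul_apply, blkDiag, Matrix.blockDiagonal_apply, Matrix.one_apply,
    Fintype.sum_prod_type, ite_and]

theorem Cmat_nonneg (hP0 : ∀ i j, 0 ≤ P i j) (x y : Fin N × Fin n) : 0 ≤ Cmat Gs P x y := by
  obtain ⟨i, u⟩ := x; obtain ⟨j, v⟩ := y
  rw [Cmat_apply]
  exact mul_nonneg (hP0 j i) (Jmat_nonneg _ u v)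

theorem Cpow_nonneg (hP0 : ∀ i j, 0 ≤ P i j) (m : ℕ) (x y : Fin N × Fin n) :
    0 ≤ (Cmat Gs P ^ m) x y := by
  induction m generalizing x y with
  | zero => simp [Matrix.one_apply]; positivity
  | succ m ih =>
      rw [pow_succ', Matrix.mul_apply]
      exact Finset.sum_nonneg fun z _ => mul_nonneg (Cmat_nonneg Gs P hP0 x z) (ih z y)

theorem Cpow_rowsum_le (hP0 : ∀ i j, 0 ≤ P i j) (hProw : ∀ i, ∑ j, P i j = 1) (m : ℕ)
    (i : Fin N) (u : Fin n) :
    ∑ q : Fin N × Fin n, (Cmat Gs P ^ m) (i, u) q ≤ (((n:ℝ)-1)/n) ^ m * ∑ j, (P ^ m) j i := by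
  set c : ℝ := ((n:ℝ)-1)/n with hc
  have hn : (1:ℝ) ≤ n := by exact_mod_cast Nat.one_le_iff_ne_zero.mpr (NeZero.ne n)
  have hc0 : 0 ≤ c := div_nonneg (by linarith) (by linarith)
  induction m generalizing i u with
  | zero => simp [Matrix.one_apply, Fintype.sum_prod_type, Finset.sum_ite_eq]
  | succ m ih =>
      rw [pow_succ']
      calc ∑ q : Fin N × Fin n, (Cmat Gs P * Cmat Gs P ^ m) (i, u) q
          = ∑ p : Fin N × Fin n, Cmat Gs P (i,u) p * ∑ q : Fin N × Fin n, (Cmat Gs P ^ m) p q := by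
            simp_rw [Matrix.mul_apply]
            rw [Finset.sum_comm]
            simp_rw [← Finset.mul_sum]
        _ ≤ ∑ p : Fin N × Fin n, Cmat Gs P (i,u) p * (c ^ m * ∑ j, (P ^ m) j p.1) := by
            refine Finset.sum_le_sum fun p _ => ?_
            exact mul_le_mul_of_nonneg_left (ih p.1 p.2) (Cmat_nonneg Gs P hP0 (i,u) p)
        _ = ∑ k : Fin N, (∑ w : Fin n, Jmat (Gs k) u w) * (P k i * (c ^ m * ∑ j, (P ^ m) j k)) := by
            rw [Fintype.sum_prod_type]
            congr 1; funext k
            rw [Finset.sum_mul]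
            congr 1; funext w
            rw [Cmat_apply]; ring
        _ ≤ ∑ k : Fin N, c * (P k i * (c ^ m * ∑ j, (P ^ m) j k)) := by
            refine Finset.sum_le_sum fun k _ => ?_
            refine mul_le_mul_of_nonneg_right (Jmat_rowsum_le _ u) ?_
            refine mul_nonneg (hP0 k i) (mul_nonneg (pow_nonneg hc0 m) ?_)
            exact Finset.sum_nonneg fun j _ => (pow_stoch P hP0 hProw m).1 j k
        _ = c ^ (m+1) * ∑ j, (P ^ (m+1)) j i := by
            have h1 : ∑ k, c * (P k i * (c ^ m * ∑ j, (P ^ m) j k))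
                = ∑ k, ∑ j, c^(m+1) * ((P^m) j k * P k i) := by
              refine Finset.sum_congr rfl fun k _ => ?_
              rw [Finset.mul_sum, Finset.mul_sum, Finset.mul_sum]
              exact Finset.sum_congr rfl fun j _ => by ring
            rw [h1, Finset.sum_comm, Finset.mul_sum]
            refine Finset.sum_congr rfl fun j _ => ?_
            rw [pow_succ P m, Matrix.mul_apply, Finset.mul_sum]

theorem Cpow_entry_le (hP0 : ∀ i j, 0 ≤ P i j) (hProw : ∀ i, ∑ j, P i j = 1) (m : ℕ)
    (x y : Fin N × Fin n) : (Cmat Gs P ^ m) x y ≤ (((n:ℝ)-1)/n) ^ m * N := by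
  obtain ⟨i, u⟩ := x
  have hn : (1:ℝ) ≤ n := by exact_mod_cast Nat.one_le_iff_ne_zero.mpr (NeZero.ne n)
  calc (Cmat Gs P ^ m) (i,u) y ≤ ∑ q : Fin N × Fin n, (Cmat Gs P ^ m) (i, u) q :=
        Finset.single_le_sum (fun q _ => Cpow_nonneg Gs P hP0 m (i,u) q) (Finset.mem_univ y)
    _ ≤ (((n:ℝ)-1)/n) ^ m * ∑ j, (P ^ m) j i := Cpow_rowsum_le Gs P hP0 hProw m i u
    _ ≤ (((n:ℝ)-1)/n) ^ m * N := by
        refine mul_le_mul_of_nonneg_left ?_ (pow_nonneg (div_nonneg (by linarith) (by linarith)) m)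
        calc ∑ j, (P ^ m) j i ≤ ∑ j : Fin N, (1:ℝ) := Finset.sum_le_sum fun j _ => by
              calc (P ^ m) j i ≤ ∑ k, (P ^ m) j k :=
                    Finset.single_le_sum (fun k _ => (pow_stoch P hP0 hProw m).1 j k)
                      (Finset.mem_univ i)
                _ = 1 := (pow_stoch P hP0 hProw m).2 j
          _ = N := by simp

end Clem

section SpecLem

variable {m : Type*} [Fintype m] [DecidableEq m]

theorem specRad_lt_one [Nonempty m]
    (C : Matrix m m ℝ) (c B : ℝ) (hc0 : 0 ≤ c) (hc1 : c < 1)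
    (h0 : ∀ k (x y : m), 0 ≤ (C ^ k) x y)
    (hb : ∀ k (x y : m), (C ^ k) x y ≤ c ^ k * B) :
    specRad C < 1 := by
  obtain ⟨k, hk⟩ : ∃ k, (Fintype.card m : ℝ) * (c ^ (k+1) * B) < 1 := by
    have h := tendsto_pow_atTop_nhds_zero_of_lt_one hc0 hc1
    have h2 : Tendsto (fun k : ℕ => (Fintype.card m : ℝ) * (c ^ (k+1) * B)) atTop (𝓝 0) := by
      have := ((h.comp (tendsto_add_atTop_nat 1)).mul_const B).const_mul (Fintype.card m : ℝ)
      simpa using this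
    exact (h2.eventually (eventually_lt_nhds (by norm_num : (0:ℝ) < 1))).exists
  set M := C.map (algebraMap ℝ ℂ) with hM
  have hmap : M ^ (k+1) = (C ^ (k+1)).map (algebraMap ℝ ℂ) := by
    have := map_pow (RingHom.mapMatrix (algebraMap ℝ ℂ)) C (k+1)
    simpa [RingHom.mapMatrix_apply, hM] using this.symm
  have hnorm : ‖M ^ (k+1)‖₊ < 1 := by
    rw [Matrix.linfty_opNNNorm_def]
    refine (Finset.sup_lt_iff (by norm_num)).mpr fun i _ => ?_
    rw [← NNReal.coe_lt_coe]
    push_cast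
    have he : ∀ j, (‖(M ^ (k+1)) i j‖₊ : ℝ) = (C ^ (k+1)) i j := by
      intro j
      rw [hmap]
      simp only [Matrix.map_apply, coe_nnnorm]
      rw [show ((algebraMap ℝ ℂ) ((C ^ (k+1)) i j)) = (((C ^ (k+1)) i j : ℝ) : ℂ) from rfl,
        Complex.norm_real, Real.norm_of_nonneg (h0 (k+1) i j)]
    calc ∑ j, (‖(M ^ (k+1)) i j‖₊ : ℝ) = ∑ j, (C ^ (k+1)) i j := by
          exact Finset.sum_congr rfl fun j _ => he j
      _ ≤ (Fintype.card m : ℝ) * (c ^ (k+1) * B) := by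
          have := Finset.sum_le_card_nsmul Finset.univ (fun j => (C ^ (k+1)) i j)
            (c ^ (k+1) * B) (fun j _ => hb (k+1) i j)
          simpa [nsmul_eq_mul, Finset.card_univ] using this
      _ < 1 := hk
  calc spectralRadius ℂ M
      ≤ (‖M ^ (k+1)‖₊ : ℝ≥0∞) ^ (1/(k+1) : ℝ) *
          (‖(1 : Matrix m m ℂ)‖₊ : ℝ≥0∞) ^ (1/(k+1) : ℝ) :=
        spectrum.spectralRadius_le_pow_nnnorm_pow_one_div ℂ M k
    _ < 1 := by
        rw [nnnorm_one, ENNReal.coe_one, ENNReal.one_rpow, mul_one]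
        exact ENNReal.rpow_lt_one (ENNReal.coe_lt_one_iff.mpr hnorm) (by positivity)

theorem isUnit_det_one_sub (C : Matrix m m ℝ) (h : specRad C < 1) : IsUnit (1 - C).det := by
  have h1 : (1 : ℂ) ∉ spectrum ℂ (C.map (algebraMap ℝ ℂ)) := by
    intro hmem
    have hle : (‖(1:ℂ)‖₊ : ℝ≥0∞) ≤ spectralRadius ℂ (C.map (algebraMap ℝ ℂ)) :=
      le_iSup₂ (f := fun k (_ : k ∈ spectrum ℂ (C.map (algebraMap ℝ ℂ))) => (‖k‖₊ : ℝ≥0∞)) 1 hmem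
    simp only [nnnorm_one, ENNReal.coe_one] at hle
    exact absurd (lt_of_le_of_lt hle h) (lt_irrefl _)
  have hunit : IsUnit ((1 : Matrix m m ℂ) - C.map (algebraMap ℝ ℂ)) := by
    have := spectrum.notMem_iff.mp h1
    simpa using this
  have hdetC : IsUnit ((1 : Matrix m m ℂ) - C.map (algebraMap ℝ ℂ)).det :=
    (Matrix.isUnit_iff_isUnit_det _).mp hunit
  have hmap : (1 : Matrix m m ℂ) - C.map (algebraMap ℝ ℂ)
      = ((1 - C).map (algebraMap ℝ ℂ)) := by
    have := map_sub (RingHom.mapMatrix (algebraMap ℝ ℂ)) 1 C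
    simpa [RingHom.mapMatrix_apply] using this.symm
  rw [hmap] at hdetC
  rw [show ((1 - C).map (algebraMap ℝ ℂ)) = (RingHom.mapMatrix (algebraMap ℝ ℂ)) (1 - C) from rfl,
    ← RingHom.map_det] at hdetC
  rw [isUnit_iff_ne_zero]
  intro h0
  rw [h0] at hdetC
  simp at hdetC

theorem inv_eq_sum_add (C : Matrix m m ℝ) (hdet : IsUnit (1 - C).det) (K : ℕ) :
    (1 - C)⁻¹ = (∑ k ∈ Finset.range K, C ^ k) + (1 - C)⁻¹ * C ^ K := by
  have hgeom : (1 - C) * (∑ k ∈ Finset.range K, C ^ k) = 1 - C ^ K := by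
    have := mul_geom_sum (C) K
    calc (1 - C) * (∑ k ∈ Finset.range K, C ^ k)
        = -((C - 1) * ∑ k ∈ Finset.range K, C ^ k) := by rw [← neg_sub C 1, neg_mul]
      _ = -(C ^ K - 1) := by rw [this]
      _ = 1 - C ^ K := neg_sub _ _
  have h2 : (1 - C)⁻¹ * ((1 - C) * (∑ k ∈ Finset.range K, C ^ k))
      = ∑ k ∈ Finset.range K, C ^ k := by
    rw [← mul_assoc, Matrix.nonsing_inv_mul _ hdet, one_mul]
  rw [hgeom, mul_sub, mul_one] at h2
  rw [← h2, sub_add_cancel]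

theorem inv_entry_tendsto (C : Matrix m m ℝ) (hdet : IsUnit (1 - C).det)
    (c B : ℝ) (hc0 : 0 ≤ c) (hc1 : c < 1)
    (h0 : ∀ k (x y : m), 0 ≤ (C ^ k) x y)
    (hb : ∀ k (x y : m), (C ^ k) x y ≤ c ^ k * B) (x y : m) :
    Tendsto (fun K => ∑ k ∈ Finset.range K, (C ^ k) x y) atTop (𝓝 ((1 - C)⁻¹ x y)) := by
  have hR : Tendsto (fun K => ((1 - C)⁻¹ * C ^ K) x y) atTop (𝓝 0) := by
    have hma : ∀ K, ((1 - C)⁻¹ * C ^ K) x y = ∑ z, (1 - C)⁻¹ x z * (C ^ K) z y := fun K =>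
      Matrix.mul_apply
    have h2 : Tendsto (fun K => ∑ z, (1 - C)⁻¹ x z * (C ^ K) z y) atTop (𝓝 0) := by
      have : Tendsto (fun K => ∑ z : m, (1 - C)⁻¹ x z * (C ^ K) z y) atTop
          (𝓝 (∑ z : m, (0:ℝ))) := by
        refine tendsto_finset_sum _ fun z _ => ?_
        refine squeeze_zero_norm (a := fun K => ‖(1 - C)⁻¹ x z‖ * (c ^ K * B)) (fun K => ?_) ?_
        · rw [norm_mul, Real.norm_of_nonneg (h0 K z y)]
          exact mul_le_mul_of_nonneg_left (hb K z y) (norm_nonneg _)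
        · have := (((tendsto_pow_atTop_nhds_zero_of_lt_one hc0 hc1).mul_const B).const_mul
            (‖(1 - C)⁻¹ x z‖))
          simpa using this
      simpa using this
    simpa only [← hma] using h2
  have hid : ∀ K, ∑ k ∈ Finset.range K, (C ^ k) x y
      = (1 - C)⁻¹ x y - ((1 - C)⁻¹ * C ^ K) x y := by
    intro K
    have := congrArg (fun M : Matrix m m ℝ => M x y) (inv_eq_sum_add C hdet K)
    simp only [Matrix.add_apply, Matrix.sum_apply] at this
    linarith [this]
  simp_rw [hid]
  simpa using tendsto_const_nhds.sub hR

theorem inv_entry_nonneg (C : Matrix m m ℝ) (hdet : IsUnit (1 - C).det)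
    (c B : ℝ) (hc0 : 0 ≤ c) (hc1 : c < 1)
    (h0 : ∀ k (x y : m), 0 ≤ (C ^ k) x y)
    (hb : ∀ k (x y : m), (C ^ k) x y ≤ c ^ k * B) (x y : m) :
    0 ≤ (1 - C)⁻¹ x y :=
  ge_of_tendsto (inv_entry_tendsto C hdet c B hc0 hc1 h0 hb x y)
    (Eventually.of_forall fun K => Finset.sum_nonneg fun k _ => h0 k x y)

theorem pow_le_inv_entry (C : Matrix m m ℝ) (hdet : IsUnit (1 - C).det)
    (c B : ℝ) (hc0 : 0 ≤ c) (hc1 : c < 1)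
    (h0 : ∀ k (x y : m), 0 ≤ (C ^ k) x y)
    (hb : ∀ k (x y : m), (C ^ k) x y ≤ c ^ k * B) (j : ℕ) (x y : m) :
    (C ^ j) x y ≤ (1 - C)⁻¹ x y := by
  refine ge_of_tendsto (inv_entry_tendsto C hdet c B hc0 hc1 h0 hb x y) ?_
  filter_upwards [eventually_ge_atTop (j+1)] with K hK
  exact Finset.single_le_sum (f := fun k => (C ^ k) x y) (fun k _ => h0 k x y)
    (Finset.mem_range.mpr (by omega))

theorem inv_entry_eq_zero (C : Matrix m m ℝ) (hdet : IsUnit (1 - C).det)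
    (c B : ℝ) (hc0 : 0 ≤ c) (hc1 : c < 1)
    (h0 : ∀ k (x y : m), 0 ≤ (C ^ k) x y)
    (hb : ∀ k (x y : m), (C ^ k) x y ≤ c ^ k * B) (x y : m)
    (hz : ∀ k, (C ^ k) x y = 0) : (1 - C)⁻¹ x y = 0 := by
  have h := inv_entry_tendsto C hdet c B hc0 hc1 h0 hb x y
  have h2 : Tendsto (fun K => ∑ k ∈ Finset.range K, (C ^ k) x y) atTop (𝓝 0) := by
    have : (fun K => ∑ k ∈ Finset.range K, (C ^ k) x y) = fun _ => (0:ℝ) := by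
      funext K; exact Finset.sum_eq_zero fun k _ => hz k
    rw [this]; exact tendsto_const_nhds
  exact tendsto_nhds_unique h h2

end SpecLem

section WalkLem

variable {N n : ℕ} [NeZero n] (Gs : Fin N → SimpleGraph (Fin n)) [∀ i, DecidableRel (Gs i).Adj]
  (P : Matrix (Fin N) (Fin N) ℝ)

theorem pow_pos_reachable (hPpos : ∀ i j, 0 < P i j) (k : ℕ) :
    ∀ (x y : Fin N × Fin n), 0 < (Cmat Gs P ^ k) x y → (⨆ i, Gs i).Reachable x.2 y.2 := by
  have hP0 : ∀ i j, 0 ≤ P i j := fun i j => (hPpos i j).le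
  induction k with
  | zero =>
      intro x y h
      rw [pow_zero, Matrix.one_apply] at h
      split at h
      · subst ‹x = y›; exact SimpleGraph.Reachable.refl _
      · exact absurd h (lt_irrefl 0)
  | succ k ih =>
      intro x y h
      rw [pow_succ', Matrix.mul_apply] at h
      obtain ⟨z, -, hz⟩ : ∃ z ∈ Finset.univ, 0 < Cmat Gs P x z * (Cmat Gs P ^ k) z y := by
        by_contra hc
        push_neg at hc
        have : ∑ z, Cmat Gs P x z * (Cmat Gs P ^ k) z y ≤ 0 :=
          Finset.sum_nonpos fun z hzm => hc z hzm
        linarith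
      have h1 : 0 < Cmat Gs P x z :=
        lt_of_le_of_ne (Cmat_nonneg Gs P hP0 x z) (by
          intro h0; rw [← h0] at hz; simp at hz)
      have h2 : 0 < (Cmat Gs P ^ k) z y :=
        lt_of_le_of_ne (Cpow_nonneg Gs P hP0 k z y) (by
          intro h0; rw [← h0] at hz; simp at hz)
      have hadj : (⨆ i, Gs i).Adj x.2 z.2 := by
        have hpos := h1
        rw [show x = (x.1, x.2) from rfl, show z = (z.1, z.2) from rfl, Cmat_apply] at hpos
        have hJ : 0 < Jmat (Gs z.1) x.2 z.2 := by
          by_contra hJ0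
          push_neg at hJ0
          nlinarith [hPpos z.1 x.1]
        rw [SimpleGraph.iSup_adj]
        exact ⟨z.1, (Jmat_pos_iff _ _ _).mp hJ⟩
      exact hadj.reachable.trans (ih z y h2)

theorem walk_pow_pos (hPpos : ∀ i j, 0 < P i j) {u v : Fin n}
    (w : (⨆ i, Gs i).Walk u v) (i : Fin N) :
    ∃ j, 0 < (Cmat Gs P ^ w.length) (i, u) (j, v) := by
  have hP0 : ∀ i j, 0 ≤ P i j := fun i j => (hPpos i j).le
  induction w generalizing i with
  | nil => exact ⟨i, by simp [Matrix.one_apply]⟩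
  | @cons a b cc hadj p ih =>
      obtain ⟨l, hl⟩ := SimpleGraph.iSup_adj.mp hadj
      obtain ⟨j, hj⟩ := ih l
      refine ⟨j, ?_⟩
      rw [SimpleGraph.Walk.length_cons, pow_succ', Matrix.mul_apply]
      have hterm : 0 < Cmat Gs P (i, a) (l, b) * (Cmat Gs P ^ p.length) (l, b) (j, cc) := by
        refine mul_pos ?_ hj
        rw [Cmat_apply]
        exact mul_pos (hPpos l i) ((Jmat_pos_iff _ _ _).mpr hl)
      calc (0:ℝ) < _ := hterm
        _ ≤ ∑ z, Cmat Gs P (i, a) z * (Cmat Gs P ^ p.length) z (j, cc) :=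
          Finset.single_le_sum
            (f := fun z => Cmat Gs P (i, a) z * (Cmat Gs P ^ p.length) z (j, cc))
            (fun z _ => mul_nonneg (Cmat_nonneg Gs P hP0 _ z) (Cpow_nonneg Gs P hP0 _ z _))
            (Finset.mem_univ (l, b))

end WalkLem

end MuAux

end Aux

/-- For entrywise positive row-stochastic `P`, positive `π` summing to `1` and `s > 0`:
`ρ(C) < 1`, the vector `μ = ∑ᵢ q⁽ⁱ⁾` (with `q = (I−C)⁻¹ψ`) is entrywise nonnegative, and
`μ_u > 0` iff `u` lies in the connected component of the source `0` in the union graph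
`⋃ᵢ Gᵢ`; in particular `μ_0 > 0`. -/
theorem mu_nonneg_and_pos_iff_connected {N n : ℕ} [NeZero n]
    (Gs : Fin N → SimpleGraph (Fin n)) [∀ i, DecidableRel (Gs i).Adj]
    (P : Matrix (Fin N) (Fin N) ℝ)
    (hPpos : ∀ i j, 0 < P i j) (hProw : ∀ i, ∑ j, P i j = 1)
    (pi : Fin N → ℝ) (hpipos : ∀ i, 0 < pi i) (hpisum : ∑ i, pi i = 1)
    (s : ℝ) (hs : 0 < s) :
    specRad (Cmat Gs P) < 1 ∧
      (∀ u, 0 ≤ muVec Gs P pi s u) ∧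
      (∀ u, 0 < muVec Gs P pi s u ↔ (⨆ i, Gs i).Reachable 0 u) ∧
      0 < muVec Gs P pi s 0 := by
  classical
  have hN : 0 < N := by
    by_contra hN
    push_neg at hN
    interval_cases N
    simp at hpisum
  haveI : NeZero N := ⟨hN.ne'⟩
  have hP0 : ∀ i j, 0 ≤ P i j := fun i j => (hPpos i j).le
  have hn : (1:ℝ) ≤ n := by exact_mod_cast Nat.one_le_iff_ne_zero.mpr (NeZero.ne n)
  set c : ℝ := ((n:ℝ)-1)/n with hcdef
  have hc0 : 0 ≤ c := div_nonneg (by linarith) (by linarith)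
  have hc1 : c < 1 := by
    rw [div_lt_one (by linarith)]; linarith
  set C := Cmat Gs P with hC
  have h0 : ∀ k (x y : Fin N × Fin n), 0 ≤ (C ^ k) x y := fun k x y =>
    MuAux.Cpow_nonneg Gs P hP0 k x y
  have hb : ∀ k (x y : Fin N × Fin n), (C ^ k) x y ≤ c ^ k * N := fun k x y =>
    MuAux.Cpow_entry_le Gs P hP0 hProw k x y
  have hspec : specRad C < 1 :=
    MuAux.specRad_lt_one C c N hc0 hc1 h0 hb
  have hdet : IsUnit (1 - C).det := MuAux.isUnit_det_one_sub C hspec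
  -- ψ facts
  set ψ := psiVec Gs P pi s with hψ
  have hψ0 : ∀ q, 0 ≤ ψ q := by
    intro q
    rw [hψ]
    unfold psiVec
    split
    · refine Finset.sum_nonneg fun i _ => ?_
      have hd : (0:ℝ) < ((Gs i).degree 0 : ℝ) + 1 := by positivity
      exact div_nonneg (mul_nonneg (mul_nonneg (hP0 i q.1) (hpipos i).le) hs.le) hd.le
    · exact le_rfl
  have hψpos : ∀ j : Fin N, 0 < ψ (j, 0) := by
    intro j
    rw [hψ]
    unfold psiVec
    simp only [if_pos rfl]
    refine Finset.sum_pos (fun i _ => ?_) Finset.univ_nonempty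
    have hdpos : (0:ℝ) < ((Gs i).degree 0 : ℝ) + 1 := by positivity
    exact div_pos (mul_pos (mul_pos (hPpos i j) (hpipos i)) hs) hdpos
  have hQ0 : ∀ x y, 0 ≤ (1 - C)⁻¹ x y := fun x y =>
    MuAux.inv_entry_nonneg C hdet c N hc0 hc1 h0 hb x y
  -- muVec expansion
  have hmu : ∀ u, muVec Gs P pi s u
      = ∑ i : Fin N, ∑ q : Fin N × Fin n, (1 - C)⁻¹ (i, u) q * ψ q := by
    intro u
    unfold muVec
    refine Finset.sum_congr rfl fun i _ => ?_
    simp [Matrix.mulVec, dotProduct, hψ, hC]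
  have hmu_nonneg : ∀ u, 0 ≤ muVec Gs P pi s u := by
    intro u
    rw [hmu]
    exact Finset.sum_nonneg fun i _ => Finset.sum_nonneg fun q _ =>
      mul_nonneg (hQ0 _ q) (hψ0 q)
  have hiff : ∀ u, 0 < muVec Gs P pi s u ↔ (⨆ i, Gs i).Reachable 0 u := by
    intro u
    constructor
    · intro hpos
      rw [hmu] at hpos
      obtain ⟨i, -, hi⟩ : ∃ i ∈ Finset.univ,
          0 < ∑ q : Fin N × Fin n, (1 - C)⁻¹ (i, u) q * ψ q := by
        by_contra hcon
        push_neg at hcon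
        have : ∑ i : Fin N, ∑ q : Fin N × Fin n, (1 - C)⁻¹ (i, u) q * ψ q ≤ 0 :=
          Finset.sum_nonpos fun i him => hcon i him
        linarith
      obtain ⟨q, -, hq⟩ : ∃ q ∈ Finset.univ, 0 < (1 - C)⁻¹ (i, u) q * ψ q := by
        by_contra hcon
        push_neg at hcon
        have : ∑ q : Fin N × Fin n, (1 - C)⁻¹ (i, u) q * ψ q ≤ 0 :=
          Finset.sum_nonpos fun q hqm => hcon q hqm
        linarith
      have hψq : 0 < ψ q := by
        rcases lt_or_eq_of_le (hψ0 q) with h | h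
        · exact h
        · rw [← h] at hq; simp at hq
      have hq2 : q.2 = 0 := by
        by_contra hq2
        rw [hψ] at hψq
        unfold psiVec at hψq
        simp only [if_neg hq2] at hψq
        exact absurd hψq (lt_irrefl 0)
      have hQpos : 0 < (1 - C)⁻¹ (i, u) q := by
        rcases lt_or_eq_of_le (hQ0 (i,u) q) with h | h
        · exact h
        · rw [← h] at hq; simp at hq
      have hk : ∃ k, 0 < (C ^ k) (i, u) q := by
        by_contra hcon
        push_neg at hcon
        have hz : ∀ k, (C ^ k) (i, u) q = 0 := fun k =>
          le_antisymm (hcon k) (h0 k (i,u) q)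
        have := MuAux.inv_entry_eq_zero C hdet c N hc0 hc1 h0 hb (i,u) q hz
        rw [this] at hQpos
        exact absurd hQpos (lt_irrefl 0)
      obtain ⟨k, hkpos⟩ := hk
      have := MuAux.pow_pos_reachable Gs P hPpos k (i, u) q hkpos
      rw [hq2] at this
      exact this.symm
    · intro hreach
      obtain ⟨w⟩ := hreach.symm
      obtain ⟨j, hj⟩ := MuAux.walk_pow_pos Gs P hPpos w (Classical.arbitrary (Fin N))
      set i0 := Classical.arbitrary (Fin N)
      have hQge : 0 < (1 - C)⁻¹ (i0, u) (j, 0) :=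
        lt_of_lt_of_le hj (MuAux.pow_le_inv_entry C hdet c N hc0 hc1 h0 hb w.length (i0, u) (j, 0))
      rw [hmu]
      refine Finset.sum_pos' (fun i _ => Finset.sum_nonneg fun q _ =>
        mul_nonneg (hQ0 _ q) (hψ0 q)) ⟨i0, Finset.mem_univ i0, ?_⟩
      refine Finset.sum_pos' (fun q _ => mul_nonneg (hQ0 _ q) (hψ0 q))
        ⟨(j, 0), Finset.mem_univ _, mul_pos hQge (hψpos j)⟩
  exact ⟨hspec, hmu_nonneg, hiff, (hiff 0).mpr (SimpleGraph.Reachable.refl 0)⟩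
end

section
/- Let C ∈ ℝ^{Nn×Nn} be a block N×N matrix whose blocks C_{ij} ∈ ℝ^{n×n} (i,j = 1,…,N) are all entrywise nonnegative, and let C̃ ∈ ℝ^{N×N} be the matrix with entries C̃_{ij} = ‖C_{ij}‖_∞. Then ρ(C) ≤ ρ(C̃). -/
open Matrix
open scoped ENNReal

/-- `‖M‖_∞`: the matrix norm induced by the `ℓ∞` vector norm, i.e. the maximum
absolute row sum. -/
noncomputable def infNorm {m n : Type*} [Fintype n] (M : Matrix m n ℝ) : ℝ :=
  ⨆ i, ∑ j, |M i j|

private lemma infNorm_nonneg' {m n : Type*} [Fintype n] (M : Matrix m n ℝ) : 0 ≤ infNorm M :=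
  Real.iSup_nonneg fun _ => Finset.sum_nonneg fun _ _ => abs_nonneg _

private lemma rowsum_le_infNorm' {m n : Type*} [Finite m] [Fintype n] (M : Matrix m n ℝ)
    (i : m) : ∑ j, |M i j| ≤ infNorm M := by
  unfold infNorm
  exact le_ciSup (f := fun i => ∑ j, |M i j|) (Set.Finite.bddAbove (Set.finite_range _)) i

attribute [local instance] Matrix.linftyOpNormedAddCommGroup Matrix.linftyOpNormedRing
  Matrix.linftyOpNormedAlgebra Matrix.linftyOpNormedSpace

/-- If `C` is a block `N × N` matrix with entrywise nonnegative `n × n` blocks `B i j`,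
and `C̃` is the `N × N` matrix with entries `C̃ᵢⱼ = ‖B i j‖_∞`, then `ρ(C) ≤ ρ(C̃)`. -/
theorem specRad_block_le_specRad_infNorm {N n : ℕ}
    (B : Fin N → Fin N → Matrix (Fin n) (Fin n) ℝ)
    (hB : ∀ i j u v, 0 ≤ B i j u v) :
    specRad (Matrix.of fun p q : Fin N × Fin n => B p.1 q.1 p.2 q.2) ≤
      specRad (Matrix.of fun i j : Fin N => infNorm (B i j)) := by
  classical
  set C : Matrix (Fin N × Fin n) (Fin N × Fin n) ℝ :=
    Matrix.of fun p q : Fin N × Fin n => B p.1 q.1 p.2 q.2 with hC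
  set T : Matrix (Fin N) (Fin N) ℝ := Matrix.of fun i j : Fin N => infNorm (B i j) with hT
  have hCnn : ∀ p q, 0 ≤ C p q := fun p q => hB p.1 q.1 p.2 q.2
  have hTnn : ∀ i j, 0 ≤ T i j := fun i j => infNorm_nonneg' (B i j)
  -- powers are entrywise nonnegative
  have hCpow : ∀ k p q, 0 ≤ (C ^ k) p q := by
    intro k
    induction k with
    | zero =>
      intro p q
      rcases eq_or_ne p q with h | h <;> simp [Matrix.one_apply, h]
    | succ k ih =>
      intro p q
      rw [pow_succ, Matrix.mul_apply]
      exact Finset.sum_nonneg fun r _ => mul_nonneg (ih p r) (hCnn r q)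
  have hTpow : ∀ k i j, 0 ≤ (T ^ k) i j := by
    intro k
    induction k with
    | zero =>
      intro i j
      rcases eq_or_ne i j with h | h <;> simp [Matrix.one_apply, h]
    | succ k ih =>
      intro i j
      rw [pow_succ, Matrix.mul_apply]
      exact Finset.sum_nonneg fun r _ => mul_nonneg (ih i r) (hTnn r j)
  -- key inequality: block row sums of `C ^ k` are dominated by entries of `T ^ k`
  have key : ∀ k (p : Fin N × Fin n) (j : Fin N), ∑ v, (C ^ k) p (j, v) ≤ (T ^ k) p.1 j := by
    intro k
    induction k with
    | zero =>
      intro p j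
      have h1 : ∑ v, (C ^ 0) p (j, v) = if p.1 = j then (1 : ℝ) else 0 := by
        rcases p with ⟨i, u⟩
        rcases eq_or_ne i j with h | h <;>
          simp [Matrix.one_apply, Prod.ext_iff, h, Finset.sum_ite_eq]
      have h2 : (T ^ 0) p.1 j = if p.1 = j then (1 : ℝ) else 0 := by
        rcases eq_or_ne p.1 j with h | h <;> simp [Matrix.one_apply, h]
      rw [h1, h2]
    | succ k ih =>
      intro p j
      have hrow : ∀ r : Fin N × Fin n, ∑ v, C r (j, v) ≤ T r.1 j := by
        intro r
        have := rowsum_le_infNorm' (B r.1 j) r.2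
        calc ∑ v, C r (j, v) = ∑ v, |B r.1 j r.2 v| := by
              refine Finset.sum_congr rfl fun v _ => ?_
              rw [abs_of_nonneg (hB _ _ _ _)]; rfl
          _ ≤ infNorm (B r.1 j) := this
          _ = T r.1 j := rfl
      calc ∑ v, (C ^ (k + 1)) p (j, v)
          = ∑ v, ∑ r, (C ^ k) p r * C r (j, v) := by
            simp only [pow_succ, Matrix.mul_apply]
        _ = ∑ r, (C ^ k) p r * ∑ v, C r (j, v) := by
            rw [Finset.sum_comm]
            exact Finset.sum_congr rfl fun r _ => (Finset.mul_sum _ _ _).symm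
        _ ≤ ∑ r, (C ^ k) p r * T r.1 j := by
            refine Finset.sum_le_sum fun r _ => ?_
            exact mul_le_mul_of_nonneg_left (hrow r) (hCpow k p r)
        _ = ∑ l, (∑ w, (C ^ k) p (l, w)) * T l j := by
            rw [Fintype.sum_prod_type]
            simp [Finset.sum_mul]
        _ ≤ ∑ l, (T ^ k) p.1 l * T l j := by
            refine Finset.sum_le_sum fun l _ => ?_
            exact mul_le_mul_of_nonneg_right (ih p l) (hTnn l j)
        _ = (T ^ (k + 1)) p.1 j := by rw [pow_succ, Matrix.mul_apply]
  -- pass to complex matrices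
  set f : ℝ →+* ℂ := algebraMap ℝ ℂ with hf
  set Cc : Matrix (Fin N × Fin n) (Fin N × Fin n) ℂ := C.map f with hCc
  set Tc : Matrix (Fin N) (Fin N) ℂ := T.map f with hTc
  have hCck : ∀ k : ℕ, Cc ^ k = (C ^ k).map f := by
    intro k
    rw [hCc, ← RingHom.mapMatrix_apply, ← map_pow, RingHom.mapMatrix_apply]
  have hTck : ∀ k : ℕ, Tc ^ k = (T ^ k).map f := by
    intro k
    rw [hTc, ← RingHom.mapMatrix_apply, ← map_pow, RingHom.mapMatrix_apply]
  -- norm comparison for all powers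
  have hnorm : ∀ k : ℕ, ‖Cc ^ k‖₊ ≤ ‖Tc ^ k‖₊ := by
    intro k
    rw [hCck, hTck, Matrix.linfty_opNNNorm_def, Matrix.linfty_opNNNorm_def]
    refine Finset.sup_le fun p _ => le_trans ?_ (Finset.le_sup (Finset.mem_univ p.1))
    rw [← NNReal.coe_le_coe]
    push_cast
    have e1 : ∀ (q : Fin N × Fin n), ‖((C ^ k).map f) p q‖ = (C ^ k) p q := by
      intro q
      simp [Matrix.map_apply, hf, Complex.norm_real, abs_of_nonneg (hCpow k p q)]
    have e2 : ∀ j, ‖((T ^ k).map f) p.1 j‖ = (T ^ k) p.1 j := by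
      intro j
      simp [Matrix.map_apply, hf, Complex.norm_real, abs_of_nonneg (hTpow k p.1 j)]
    calc ∑ q, ‖((C ^ k).map f) p q‖ = ∑ q, (C ^ k) p q := by
          exact Finset.sum_congr rfl fun q _ => e1 q
      _ = ∑ j, ∑ v, (C ^ k) p (j, v) := by rw [Fintype.sum_prod_type]
      _ ≤ ∑ j, (T ^ k) p.1 j := Finset.sum_le_sum fun j _ => key k p j
      _ = ∑ j, ‖((T ^ k).map f) p.1 j‖ := (Finset.sum_congr rfl fun j _ => (e2 j)).symm
  -- Gelfand's formula
  haveI : CompleteSpace (Matrix (Fin N × Fin n) (Fin N × Fin n) ℂ) :=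
    FiniteDimensional.complete ℝ _
  haveI : CompleteSpace (Matrix (Fin N) (Fin N) ℂ) := FiniteDimensional.complete ℝ _
  have h1 := spectrum.pow_nnnorm_pow_one_div_tendsto_nhds_spectralRadius Cc
  have h2 := spectrum.pow_nnnorm_pow_one_div_tendsto_nhds_spectralRadius Tc
  have : spectralRadius ℂ Cc ≤ spectralRadius ℂ Tc := by
    refine le_of_tendsto_of_tendsto' h1 h2 fun k => ?_
    exact ENNReal.rpow_le_rpow (by exact_mod_cast hnorm k) (by positivity)
  exact this
end

section
/- Let G_1, …, G_N be finite simple graphs on Fin n (n ≥ 1) and let P be an irreducible row-stochastic N×N matrix. Then the matrix C := (Pᵀ ⊗ I_n)·blockdiag(J(G_1), …, J(G_N)) ∈ ℝ^{Nn×Nn} satisfies ρ(C) < 1. -/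
open Matrix Kronecker
open scoped ENNReal

/- ### Auxiliary lemmas -/

/-- Entries of powers of an entrywise-nonnegative matrix are nonnegative. -/
lemma pow_entry_nonneg {N : ℕ} (P : Matrix (Fin N) (Fin N) ℝ)
    (h : ∀ i j, 0 ≤ P i j) : ∀ r i j, 0 ≤ (P ^ r) i j := by
  intro r
  induction r with
  | zero =>
      intro i j
      by_cases hij : i = j <;> simp [pow_zero, Matrix.one_apply, hij]
  | succ r ih =>
      intro i j
      rw [pow_succ, Matrix.mul_apply]
      exact Finset.sum_nonneg fun k _ => mul_nonneg (ih i k) (h k j)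

/-- An irreducible row-stochastic matrix has a positive stationary distribution
(we only need positivity and the fixed-point property, not normalization). -/
lemma exists_stationary {N : ℕ} (P : Matrix (Fin N) (Fin N) ℝ)
    (hPnonneg : ∀ i j, 0 ≤ P i j) (hProw : ∀ i, ∑ j, P i j = 1)
    (hPirr : ∀ i j, ∃ r, 1 ≤ r ∧ 0 < (P ^ r) i j) :
    ∃ π : Fin N → ℝ, (∀ i, 0 < π i) ∧ ∀ i, ∑ k, P k i * π k = π i := by
  rcases Nat.eq_zero_or_pos N with hN | hN
  · subst hN
    exact ⟨fun _ => 1, fun i => i.elim0, fun i => i.elim0⟩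
  · have hdet : (P.transpose - 1).det = 0 := by
      have h1 : (P - 1).det = 0 := by
        rw [← Matrix.exists_mulVec_eq_zero_iff]
        refine ⟨fun _ => 1, ?_, ?_⟩
        · intro h
          have := congrFun h ⟨0, hN⟩
          simp at this
        · funext i
          rw [Matrix.sub_mulVec, Matrix.one_mulVec]
          simp [Matrix.mulVec, dotProduct, hProw i]
      have : P.transpose - 1 = (P - 1).transpose := by
        rw [Matrix.transpose_sub, Matrix.transpose_one]
      rw [this, Matrix.det_transpose]
      exact h1
    obtain ⟨v, hv0, hv⟩ := Matrix.exists_mulVec_eq_zero_iff.mpr hdet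
    have hv' : P.transpose *ᵥ v = v := by
      rw [Matrix.sub_mulVec, Matrix.one_mulVec, sub_eq_zero] at hv
      exact hv
    have hfix : ∀ i, ∑ k, P k i * v k = v i := by
      intro i
      have := congrFun hv' i
      simpa [Matrix.mulVec, dotProduct, Matrix.transpose_apply] using this
    -- pass to absolute values
    set ρ : Fin N → ℝ := fun i => |v i| with hρ
    have hle : ∀ i, ρ i ≤ ∑ k, P k i * ρ k := by
      intro i
      calc ρ i = |∑ k, P k i * v k| := by rw [hfix i]
        _ ≤ ∑ k, |P k i * v k| := Finset.abs_sum_le_sum_abs _ _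
        _ = ∑ k, P k i * ρ k := by
            refine Finset.sum_congr rfl fun k _ => ?_
            rw [abs_mul, abs_of_nonneg (hPnonneg k i)]
    have hsum : ∑ i, (∑ k, P k i * ρ k - ρ i) = 0 := by
      have h1 : ∑ i, ∑ k, P k i * ρ k = ∑ k, ρ k := by
        rw [Finset.sum_comm]
        refine Finset.sum_congr rfl fun k _ => ?_
        rw [← Finset.sum_mul, hProw k, one_mul]
      rw [Finset.sum_sub_distrib, h1, sub_self]
    have heq : ∀ i, ∑ k, P k i * ρ k = ρ i := by
      intro i
      have := (Finset.sum_eq_zero_iff_of_nonneg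
        (fun j (_ : j ∈ Finset.univ) => sub_nonneg.mpr (hle j))).mp hsum i (Finset.mem_univ i)
      linarith [this]
    -- iterate to powers
    have hpow : ∀ r i, ∑ k, (P ^ r) k i * ρ k = ρ i := by
      intro r
      induction r with
      | zero =>
          intro i
          simp [pow_zero, Matrix.one_apply]
      | succ r ih =>
          intro i
          have : ∀ k, (P ^ (r + 1)) k i = ∑ m, (P ^ r) k m * P m i := by
            intro k; rw [pow_succ, Matrix.mul_apply]
          calc ∑ k, (P ^ (r+1)) k i * ρ k
              = ∑ k, ∑ m, (P ^ r) k m * P m i * ρ k := by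
                refine Finset.sum_congr rfl fun k _ => ?_
                rw [this k, Finset.sum_mul]
            _ = ∑ m, P m i * ∑ k, (P ^ r) k m * ρ k := by
                rw [Finset.sum_comm]
                simp only [Finset.mul_sum]
                exact Finset.sum_congr rfl fun m _ =>
                  Finset.sum_congr rfl fun k _ => by ring
            _ = ∑ m, P m i * ρ m := by
                refine Finset.sum_congr rfl fun m _ => by rw [ih m]
            _ = ρ i := heq i
    obtain ⟨i0, hi0⟩ := Function.ne_iff.mp hv0
    have hρ0 : 0 < ρ i0 := abs_pos.mpr hi0
    refine ⟨ρ, fun j => ?_, heq⟩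
    obtain ⟨r, -, hr⟩ := hPirr i0 j
    have : (P ^ r) i0 j * ρ i0 ≤ ∑ k, (P ^ r) k j * ρ k :=
      Finset.single_le_sum
        (fun k _ => mul_nonneg (pow_entry_nonneg P hPnonneg r k j) (abs_nonneg _))
        (Finset.mem_univ i0)
    rw [hpow r j] at this
    exact lt_of_lt_of_le (mul_pos hr hρ0) this

lemma Centry {N n : ℕ} (P : Matrix (Fin N) (Fin N) ℝ) (Js : Fin N → Matrix (Fin n) (Fin n) ℝ)
    (p q : Fin N × Fin n) :
    ((P.transpose ⊗ₖ (1 : Matrix (Fin n) (Fin n) ℝ)) * blkDiag Js) p q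
      = P q.1 p.1 * Js q.1 p.2 q.2 := by
  obtain ⟨i, u⟩ := p
  obtain ⟨k, w⟩ := q
  rw [Matrix.mul_apply, Fintype.sum_prod_type]
  simp [blkDiag, Matrix.blockDiagonal_apply, Matrix.kroneckerMap_apply, Matrix.one_apply,
    ite_mul, mul_ite, mul_zero, zero_mul, Finset.sum_ite_eq, Finset.sum_ite_eq',
    Matrix.transpose_apply, mul_comm]

/-- For graphs `G_1, …, G_N` on `Fin n` (`n ≥ 1`) and an irreducible row-stochastic `P`,
the matrix `C = (Pᵀ ⊗ I_n) · blockdiag(J(G_1), …, J(G_N))` satisfies `ρ(C) < 1`. -/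
theorem specRad_Cmat_lt_one {N n : ℕ} (hn : 1 ≤ n)
    (Gs : Fin N → SimpleGraph (Fin n)) [∀ i, DecidableRel (Gs i).Adj]
    (P : Matrix (Fin N) (Fin N) ℝ)
    (hPnonneg : ∀ i j, 0 ≤ P i j) (hProw : ∀ i, ∑ j, P i j = 1)
    (hPirr : ∀ i j, ∃ r, 1 ≤ r ∧ 0 < (P ^ r) i j) :
    specRad ((P.transpose ⊗ₖ (1 : Matrix (Fin n) (Fin n) ℝ)) *
      blkDiag (fun i => Jmat (Gs i))) < 1 := by
  classical
  set C : Matrix (Fin N × Fin n) (Fin N × Fin n) ℝ :=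
    (P.transpose ⊗ₖ (1 : Matrix (Fin n) (Fin n) ℝ)) * blkDiag (fun i => Jmat (Gs i)) with hC
  have hn' : (1:ℝ) ≤ (n:ℝ) := by exact_mod_cast hn
  set c : ℝ := ((n:ℝ) - 1) / n with hc
  have hnpos : (0:ℝ) < n := by linarith
  have hc0 : 0 ≤ c := div_nonneg (by linarith) hnpos.le
  have hc1 : c < 1 := by rw [hc, div_lt_one hnpos]; linarith
  have hJnonneg : ∀ k (u w : Fin n), 0 ≤ Jmat (Gs k) u w := by
    intro k u w
    unfold Jmat
    simp only [Matrix.of_apply]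
    apply div_nonneg
    · split_ifs <;> norm_num
    · positivity
  have hJrow : ∀ k (u : Fin n), ∑ w, Jmat (Gs k) u w ≤ c := by
    intro k u
    have hdeg : ((Gs k).degree u : ℝ) + 1 ≤ (n:ℝ) := by
      have h := (Gs k).degree_lt_card_verts u
      rw [Fintype.card_fin] at h
      exact_mod_cast Nat.succ_le_of_lt h
    have hdpos : (0:ℝ) < ((Gs k).degree u : ℝ) + 1 := by positivity
    have hsum : ∑ w, Jmat (Gs k) u w
        = ((Gs k).degree u : ℝ) / (((Gs k).degree u : ℝ) + 1) := by
      unfold Jmat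
      simp only [Matrix.of_apply]
      rw [← Finset.sum_div]
      congr 1
      rw [Finset.sum_boole]
      congr 1
      rw [SimpleGraph.degree, SimpleGraph.neighborFinset_eq_filter]
    rw [hsum, hc, div_le_div_iff₀ hdpos hnpos]
    nlinarith [hdeg]
  obtain ⟨π, hπpos, hπfix⟩ := exists_stationary P hPnonneg hProw hPirr
  have hCentry : ∀ p q : Fin N × Fin n,
      C p q = P q.1 p.1 * Jmat (Gs q.1) p.2 q.2 := fun p q => Centry P _ p q
  have hCnonneg : ∀ p q, 0 ≤ C p q := fun p q => by
    rw [hCentry]; exact mul_nonneg (hPnonneg _ _) (hJnonneg _ _ _)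
  have hkey : ∀ p : Fin N × Fin n, ∑ q, C p q * π q.1 ≤ c * π p.1 := by
    intro p
    rw [Fintype.sum_prod_type]
    calc ∑ k, ∑ w, C p (k, w) * π (k, w).1
        = ∑ k, (P k p.1 * π k) * ∑ w, Jmat (Gs k) p.2 w := by
          refine Finset.sum_congr rfl fun k _ => ?_
          rw [Finset.mul_sum]
          refine Finset.sum_congr rfl fun w _ => ?_
          rw [hCentry p (k, w)]
          ring
      _ ≤ ∑ k, (P k p.1 * π k) * c :=
          Finset.sum_le_sum fun k _ => mul_le_mul_of_nonneg_left (hJrow k p.2)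
            (mul_nonneg (hPnonneg _ _) (hπpos k).le)
      _ = c * π p.1 := by rw [← Finset.sum_mul, hπfix p.1, mul_comm]
  have hspec : ∀ μ ∈ spectrum ℂ (C.map (algebraMap ℝ ℂ)), ‖μ‖ ≤ c := by
    intro μ hμ
    rw [spectrum.mem_iff] at hμ
    have hdet : (algebraMap ℂ (Matrix (Fin N × Fin n) (Fin N × Fin n) ℂ) μ
        - C.map (algebraMap ℝ ℂ)).det = 0 := by
      by_contra h
      exact hμ ((Matrix.isUnit_iff_isUnit_det _).mpr (Ne.isUnit h))
    obtain ⟨z, hz0, hz⟩ := Matrix.exists_mulVec_eq_zero_iff.mpr hdet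
    have hzeig : (C.map (algebraMap ℝ ℂ)) *ᵥ z = μ • z := by
      rw [Algebra.algebraMap_eq_smul_one, Matrix.sub_mulVec, Matrix.smul_mulVec,
        Matrix.one_mulVec, sub_eq_zero] at hz
      exact hz.symm
    obtain ⟨q0, hq0⟩ := Function.ne_iff.mp hz0
    obtain ⟨p, -, hp⟩ := Finset.exists_max_image Finset.univ
      (fun q : Fin N × Fin n => ‖z q‖ / π q.1) ⟨q0, Finset.mem_univ q0⟩
    set R : ℝ := ‖z p‖ / π p.1 with hR
    have hRpos : 0 < R :=
      lt_of_lt_of_le (div_pos (norm_pos_iff.mpr hq0) (hπpos q0.1)) (hp q0 (Finset.mem_univ q0))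
    have hbound : ∀ q, ‖z q‖ ≤ R * π q.1 := fun q =>
      (div_le_iff₀ (hπpos q.1)).mp (hp q (Finset.mem_univ q))
    have hzp : ‖z p‖ = R * π p.1 := (div_mul_cancel₀ _ (ne_of_gt (hπpos p.1))).symm
    have hzppos : 0 < ‖z p‖ := by rw [hzp]; exact mul_pos hRpos (hπpos p.1)
    have hmain : ‖μ‖ * ‖z p‖ ≤ c * ‖z p‖ := by
      have h1 : ‖μ‖ * ‖z p‖ = ‖((C.map (algebraMap ℝ ℂ)) *ᵥ z) p‖ := by
        rw [hzeig]
        simp [norm_mul]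
      rw [h1]
      have h2 : ((C.map (algebraMap ℝ ℂ)) *ᵥ z) p
          = ∑ q, (C.map (algebraMap ℝ ℂ)) p q * z q := rfl
      rw [h2]
      calc ‖∑ q, (C.map (algebraMap ℝ ℂ)) p q * z q‖
          ≤ ∑ q, ‖(C.map (algebraMap ℝ ℂ)) p q * z q‖ := norm_sum_le _ _
        _ = ∑ q, C p q * ‖z q‖ := by
            refine Finset.sum_congr rfl fun q _ => ?_
            rw [norm_mul, Matrix.map_apply]
            have : ‖algebraMap ℝ ℂ (C p q)‖ = C p q := by
              rw [show algebraMap ℝ ℂ (C p q) = ((C p q : ℝ) : ℂ) from rfl,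
                Complex.norm_real, Real.norm_eq_abs, abs_of_nonneg (hCnonneg p q)]
            rw [this]
        _ ≤ ∑ q, C p q * (R * π q.1) :=
            Finset.sum_le_sum fun q _ =>
              mul_le_mul_of_nonneg_left (hbound q) (hCnonneg p q)
        _ = R * ∑ q, C p q * π q.1 := by
            rw [Finset.mul_sum]
            exact Finset.sum_congr rfl fun q _ => by ring
        _ ≤ R * (c * π p.1) := mul_le_mul_of_nonneg_left (hkey p) hRpos.le
        _ = c * ‖z p‖ := by rw [hzp]; ring
    exact (mul_le_mul_iff_of_pos_right hzppos).mp hmain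
  have hle : specRad C ≤ ((c.toNNReal : ℝ≥0∞)) := by
    unfold specRad spectralRadius
    refine iSup₂_le fun μ hμ => ?_
    refine ENNReal.coe_le_coe.mpr ?_
    rw [← NNReal.coe_le_coe, coe_nnnorm, Real.coe_toNNReal _ hc0]
    exact hspec μ hμ
  refine lt_of_le_of_lt hle ?_
  rw [← ENNReal.coe_one, ENNReal.coe_lt_coe, ← NNReal.coe_lt_coe, NNReal.coe_one,
    Real.coe_toNNReal _ hc0]
  exact hc1
end
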